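/- Every n-vertex 3-graph H with minimum codegree δ₂(H) ≥ n/3 has at most two tight components. -/

import Mathlib

open Finset

variable {V : Type*} [DecidableEq V] [Fintype V]

/-- A tight path in a 3-graph `H`: a list of distinct vertices in which every 3
consecutive vertices form an edge of `H`. -/
def IsTightPath (H : Finset (Finset V)) (l : List V) : Prop :=
  l.Nodup ∧ ∀ (i : ℕ) (h : i + 2 < l.length),
    ({l[i]'(by omega), l[i + 1]'(by omega), l[i + 2]'(by omega)} : Finset V) ∈ H

/-- The codegree of a pair of vertices. -/
def codeg (H : Finset (Finset V)) (u v : V) : ℕ :=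
  (H.filter fun e => u ∈ e ∧ v ∈ e).card

/-- The first end of a tight path `v₁ v₂ ⋯ v_p`, i.e. the ordered pair `(v₂, v₁)`. -/
def firstEnd (l : List V) : Option (V × V) :=
  match l with
  | a :: b :: _ => some (b, a)
  | _ => none

/-- The last end of a tight path `v₁ v₂ ⋯ v_p`, i.e. the ordered pair `(v_{p-1}, v_p)`. -/
def lastEnd (l : List V) : Option (V × V) :=
  firstEnd l.reverse

/-- The set of vertices covered by a family of paths. -/
def famVerts (Ps : List (List V)) : Finset V :=
  Ps.foldr (fun P s => P.toFinset ∪ s) ∅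

/-- A family of pairwise vertex-disjoint tight paths. -/
def PathFamily (H : Finset (Finset V)) (Ps : List (List V)) : Prop :=
  (∀ P ∈ Ps, IsTightPath H P) ∧
  Ps.Pairwise fun P Q => Disjoint P.toFinset Q.toFinset

/-- Two families of paths have the same length and corresponding members have the same ends. -/
def SameEndsList (Ps Qs : List (List V)) : Prop :=
  Ps.length = Qs.length ∧ ∀ j < Ps.length,
    firstEnd (Ps.getD j []) = firstEnd (Qs.getD j []) ∧
    lastEnd (Ps.getD j []) = lastEnd (Qs.getD j [])

/-- `u` and `v` are `(β, i)`-reachable in `H`. -/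
def Reachable (H : Finset (Finset V)) (β : ℝ) (i : ℕ) (u v : V) : Prop :=
  β * (Fintype.card V : ℝ) ^ (5 * i - 1) ≤
    (({T : Finset V | T.card = 5 * i - 1 ∧
      ∃ Ps Qs : List (List V), Ps.length = i ∧
        (∀ P ∈ Ps, IsTightPath H P ∧ P.length = 5) ∧
        (∀ Q ∈ Qs, IsTightPath H Q ∧ Q.length = 5) ∧
        Ps.Pairwise (fun P P' => Disjoint P.toFinset P'.toFinset) ∧
        Qs.Pairwise (fun Q Q' => Disjoint Q.toFinset Q'.toFinset) ∧
        famVerts Ps = insert u T ∧ famVerts Qs = insert v T ∧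
        SameEndsList Ps Qs} : Set (Finset V)).ncard : ℝ)

/-- The set `Ñ_{β,i}(v)` of vertices `(β,i)`-reachable to `v`. -/
def reachSet (H : Finset (Finset V)) (β : ℝ) (i : ℕ) (v : V) : Set V :=
  {u | u ≠ v ∧ Reachable H β i u v}

/-- A vertex set is `(β, i)`-closed in `H`. -/
def IsClosedSet (H : Finset (Finset V)) (β : ℝ) (i : ℕ) (U : Finset V) : Prop :=
  ∀ u ∈ U, ∀ v ∈ U, u ≠ v → Reachable H β i u v

/-- `Ps` is an `S`-absorber in `H`. -/
def IsAbsorber (H : Finset (Finset V)) (S : Finset V) (Ps : List (List V)) : Prop :=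
  PathFamily H Ps ∧ Disjoint (famVerts Ps) S ∧
  ∃ Qs : List (List V), PathFamily H Qs ∧ famVerts Qs = famVerts Ps ∪ S ∧
    SameEndsList Ps Qs

/-- Two edges of `H` sharing exactly two vertices. -/
def EdgeAdj (H : Finset (Finset V)) (e f : Finset V) : Prop :=
  e ∈ H ∧ f ∈ H ∧ (e ∩ f).card = 2

/-- Two edges lie in the same tight component: they are joined by a pseudo-path. -/
def SameTightComponent (H : Finset (Finset V)) (e f : Finset V) : Prop :=
  e ∈ H ∧ f ∈ H ∧ Relation.ReflTransGen (EdgeAdj H) e f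

/-- `H` has at most two tight components: among any three edges two lie in a common
tight component. -/
def AtMostTwoTightComponents (H : Finset (Finset V)) : Prop :=
  ∀ e ∈ H, ∀ f ∈ H, ∀ g ∈ H,
    SameTightComponent H e f ∨ SameTightComponent H e g ∨ SameTightComponent H f g

/-- The number of edges of `H` containing the set `p`. -/
def degPair (H : Finset (Finset V)) (p : Finset V) : ℕ :=
  (H.filter fun e => p ⊆ e).card

/-- `H` is `(μ, θ)`-dense: all but at most `θ * C(n,2)` pairs have codegree at least `μ n`. -/
def Dense3 (H : Finset (Finset V)) (μ θ : ℝ) : Prop :=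
  (({p : Finset V | p.card = 2 ∧ (degPair H p : ℝ) < μ * Fintype.card V} :
      Set (Finset V)).ncard : ℝ) ≤ θ * ((Fintype.card V).choose 2)

/-- `H` is strongly `(μ, θ)`-dense. -/
def StronglyDense3 (H : Finset (Finset V)) (μ θ : ℝ) : Prop :=
  Dense3 H μ θ ∧ ∀ p : Finset V, p.card = 2 →
    degPair H p = 0 ∨ μ * Fintype.card V ≤ (degPair H p : ℝ)

/-- A tight Hamilton cycle: a cyclic ordering of all vertices in which every 3
cyclically consecutive vertices form an edge. -/
def IsTightHamCycle (H : Finset (Finset V)) (l : List V) : Prop :=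
  l.Nodup ∧ l.toFinset = Finset.univ ∧ 3 ≤ l.length ∧
  ∀ (i : ℕ) (h : i < l.length),
    ({l[i]'h, l[(i + 1) % l.length]'(Nat.mod_lt _ (by omega)),
      l[(i + 2) % l.length]'(Nat.mod_lt _ (by omega))} : Finset V) ∈ H

/-- `H ∗ K_t^{(3)}`: add `t` new vertices and all triples meeting them. -/
def starK (H : Finset (Finset V)) (t : ℕ) : Finset (Finset (V ⊕ Fin t)) :=
  (Finset.univ : Finset (Finset (V ⊕ Fin t))).filter fun e =>
    e.card = 3 ∧ ((∃ x ∈ e, x.isRight = true) ∨ ∃ f ∈ H, e = f.image Sum.inl)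

/-- The link of a vertex: the set of pairs forming an edge together with it. -/
def linkPairs (H : Finset (Finset V)) (u : V) : Set (Finset V) :=
  {p | p.card = 2 ∧ u ∉ p ∧ insert u p ∈ H}

/-!
Colour each pair of vertices by the tight component of the edges through it: edges sharing a pair
are adjacent, and every pair lies in an edge since codegrees are positive. The three pairs of an
edge get the colour of the edge, so `δ₂(H) ≥ n/3` says that every pair `uv` has at least `n/3`
common neighbours `w` with `uw` and `vw` coloured like `uv`. Comparing the sizes of such disjoint
neighbourhoods with `n`: no vertex sees three colours, no triangle is rainbow, and if a pair of
colour `U` has ends seeing colours `A ≠ U` and `C ≠ U`, then `A = C`. These local constraints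
leave room for at most two colours.
-/

theorem Finset.card_add_card_add_card_le {α : Type*} {s A B C : Finset α} (hA : A ⊆ s)
    (hB : B ⊆ s) (hC : C ⊆ s) (hAB : Disjoint A B) (hAC : Disjoint A C) (hBC : Disjoint B C) :
    #A + #B + #C ≤ #s := by
  classical
  rw [← card_union_of_disjoint hAB, ← card_union_of_disjoint (disjoint_union_left.2 ⟨hAC, hBC⟩)]
  exact card_le_card (union_subset (union_subset hA hB) hC)

section PairColoring

variable {κ : Type*}

open Classical in
noncomputable def colorNbrs (c : V → V → κ) (x : V) (X : κ) : Finset V :=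
  {y | y ≠ x ∧ c x y = X}

open Classical in
noncomputable def monoCommonNbrs (c : V → V → κ) (u v : V) : Finset V :=
  {w | w ≠ u ∧ w ≠ v ∧ c u w = c u v ∧ c v w = c u v}

def MonoCodegreeDense (c : V → V → κ) : Prop :=
  ∀ u v, u ≠ v → Fintype.card V ≤ 3 * #(monoCommonNbrs c u v)

variable {c : V → V → κ}

@[simp]
theorem mem_colorNbrs {x y : V} {X : κ} : y ∈ colorNbrs c x X ↔ y ≠ x ∧ c x y = X := by
  simp [colorNbrs]

@[simp]
theorem mem_monoCommonNbrs {u v w : V} :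
    w ∈ monoCommonNbrs c u v ↔ w ≠ u ∧ w ≠ v ∧ c u w = c u v ∧ c v w = c u v := by
  simp [monoCommonNbrs]

theorem MonoCodegreeDense.card_colorNbrs (hc : MonoCodegreeDense c) {x y : V} (hy : y ≠ x) :
    Fintype.card V + 3 ≤ 3 * #(colorNbrs c x (c x y)) := by
  have hsub : insert y (monoCommonNbrs c x y) ⊆ colorNbrs c x (c x y) := by
    intro w hw
    rcases mem_insert.1 hw with rfl | hw
    · exact mem_colorNbrs.2 ⟨hy, rfl⟩
    · exact mem_colorNbrs.2 ⟨(mem_monoCommonNbrs.1 hw).1, (mem_monoCommonNbrs.1 hw).2.2.1⟩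
  have hy' : y ∉ monoCommonNbrs c x y := fun h => (mem_monoCommonNbrs.1 h).2.1 rfl
  have := card_le_card hsub
  rw [card_insert_of_notMem hy'] at this
  have := hc x y hy.symm
  omega

theorem MonoCodegreeDense.color_eq_or_eq_or_eq (hc : MonoCodegreeDense c) {x y₁ y₂ y₃ : V}
    (h₁ : y₁ ≠ x) (h₂ : y₂ ≠ x) (h₃ : y₃ ≠ x) :
    c x y₁ = c x y₂ ∨ c x y₁ = c x y₃ ∨ c x y₂ = c x y₃ := by
  by_contra! h
  obtain ⟨h₁₂, h₁₃, h₂₃⟩ := h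
  have hdisj {X Y : κ} (hXY : X ≠ Y) : Disjoint (colorNbrs c x X) (colorNbrs c x Y) :=
    disjoint_left.2 fun w hX hY => hXY ((mem_colorNbrs.1 hX).2.symm.trans (mem_colorNbrs.1 hY).2)
  have hcard := card_add_card_add_card_le (subset_univ _) (subset_univ _) (subset_univ _)
    (hdisj h₁₂) (hdisj h₁₃) (hdisj h₂₃)
  have := hc.card_colorNbrs h₁
  have := hc.card_colorNbrs h₂
  have := hc.card_colorNbrs h₃
  rw [card_univ] at hcard
  omega

theorem MonoCodegreeDense.not_rainbow (hc : MonoCodegreeDense c) {a b d : V} (hab : a ≠ b)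
    (hbd : b ≠ d) (had : a ≠ d) (h₁ : c a b ≠ c b d) (h₂ : c a b ≠ c a d) (h₃ : c b d ≠ c a d) :
    False := by
  have hsub {u v : V} (h : d = v ∨ c u d ≠ c u v) : monoCommonNbrs c u v ⊆ univ.erase d := by
    intro w hw
    obtain ⟨-, hwv, hcw, -⟩ := mem_monoCommonNbrs.1 hw
    refine mem_erase.2 ⟨?_, mem_univ w⟩
    rintro rfl
    tauto
  have hcard := card_add_card_add_card_le (hsub (Or.inr h₂.symm)) (hsub (Or.inl rfl))
    (hsub (Or.inl rfl))
    (disjoint_left.2 fun w hab hbd => h₁ ((mem_monoCommonNbrs.1 hab).2.2.2.symm.trans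
      (mem_monoCommonNbrs.1 hbd).2.2.1))
    (disjoint_left.2 fun w hab had => h₂ ((mem_monoCommonNbrs.1 hab).2.2.1.symm.trans
      (mem_monoCommonNbrs.1 had).2.2.1))
    (disjoint_left.2 fun w hbd had => h₃ ((mem_monoCommonNbrs.1 hbd).2.2.2.symm.trans
      (mem_monoCommonNbrs.1 had).2.2.2))
  have := hc a b hab
  have := hc b d hbd
  have := hc a d had
  have : 0 < Fintype.card V := Fintype.card_pos_iff.2 ⟨d⟩
  rw [card_erase_of_mem (mem_univ d), card_univ] at hcard
  omega

theorem MonoCodegreeDense.color_eq_of_ne_of_ne (hc : MonoCodegreeDense c) {x q y z : V}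
    (hxq : x ≠ q) (hy : y ≠ x) (hz : z ≠ q) (hxy : c x y ≠ c x q) (hqz : c q z ≠ c x q) :
    c x y = c q z := by
  by_contra hne
  have hcard := card_add_card_add_card_le (subset_univ (monoCommonNbrs c x q))
    (subset_univ (colorNbrs c x (c x y))) (subset_univ (colorNbrs c q (c q z)))
    (disjoint_left.2 fun w hw hw' =>
      hxy ((mem_colorNbrs.1 hw').2.symm.trans (mem_monoCommonNbrs.1 hw).2.2.1))
    (disjoint_left.2 fun w hw hw' =>
      hqz ((mem_colorNbrs.1 hw').2.symm.trans (mem_monoCommonNbrs.1 hw).2.2.2))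
    (disjoint_left.2 fun w hw hw' => by
      obtain ⟨hwx, hxw⟩ := mem_colorNbrs.1 hw
      obtain ⟨hwq, hqw⟩ := mem_colorNbrs.1 hw'
      exact hc.not_rainbow hxq hwq.symm hwx.symm (hqw ▸ hqz.symm) (hxw ▸ hxy.symm)
        (hqw ▸ hxw ▸ Ne.symm hne))
  have := hc x q hxq
  have := hc.card_colorNbrs hy
  have := hc.card_colorNbrs hz
  rw [card_univ] at hcard
  omega

theorem MonoCodegreeDense.color_eq_of_forall_eq (hsymm : ∀ u v, c u v = c v u)
    (hc : MonoCodegreeDense c) {x : V} {U : κ} (hx : ∀ y ≠ x, c x y = U) {p y p' y' : V}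
    (hy : y ≠ p) (hy' : y' ≠ p') (hpy : c p y ≠ U) (hpy' : c p' y' ≠ U) : c p y = c p' y' := by
  have hpx : p ≠ x := by rintro rfl; exact hpy (hx y hy)
  have hp'x : p' ≠ x := by rintro rfl; exact hpy' (hx y' hy')
  have hp : c p x = U := (hsymm p x).trans (hx p hpx)
  have hp' : c p' x = U := (hsymm p' x).trans (hx p' hp'x)
  rcases eq_or_ne p p' with rfl | hpp'
  · rcases hc.color_eq_or_eq_or_eq hpx.symm hy hy' with h | h | h
    · exact absurd (h.symm.trans hp) hpy
    · exact absurd (h.symm.trans hp) hpy'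
    · exact h
  rcases hc.color_eq_or_eq_or_eq hpx.symm hy hpp'.symm with h | h | h
  · exact absurd (h.symm.trans hp) hpy
  · have hU : c p p' = U := h.symm.trans hp
    exact hc.color_eq_of_ne_of_ne hpp' hy hy' (hU ▸ hpy) (hU ▸ hpy')
  rcases hc.color_eq_or_eq_or_eq hp'x.symm hy' hpp' with h' | h' | h'
  · exact absurd (h'.symm.trans hp') hpy'
  · exact absurd (h.trans ((hsymm p p').trans (h'.symm.trans hp'))) hpy
  · exact h.trans ((hsymm p p').trans h'.symm)

-- A vertex missing a colour that occurs elsewhere sees a single colour (hence so does everyone).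
theorem MonoCodegreeDense.color_eq_of_forall_ne (hsymm : ∀ u v, c u v = c v u)
    (hc : MonoCodegreeDense c) {x x' q z p y : V} (hx' : x' ≠ x) (hz : z ≠ q)
    (hmiss : ∀ w ≠ x, c x w ≠ c q z) (hy : y ≠ p) (hpy : c p y ≠ c x x') : c p y = c q z := by
  have hxq : x ≠ q := by rintro rfl; exact hmiss z hz rfl
  have hq : ∀ w ≠ x, c x w = c x q := fun w hw => by
    by_contra h
    exact hmiss w hw (hc.color_eq_of_ne_of_ne hxq hw hz h fun h' => hmiss q hxq.symm h'.symm)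
  have hmono : ∀ w ≠ x, c x w = c x x' := fun w hw => (hq w hw).trans (hq x' hx').symm
  exact hc.color_eq_of_forall_eq hsymm hmono hy hz hpy fun h => hmiss x' hx' h.symm

theorem MonoCodegreeDense.color_eq_or_eq_or_eq_of_ne (hsymm : ∀ u v, c u v = c v u)
    (hc : MonoCodegreeDense c) {a a' b b' d d' : V} (ha : a' ≠ a) (hb : b' ≠ b) (hd : d' ≠ d) :
    c a a' = c b b' ∨ c a a' = c d d' ∨ c b b' = c d d' := by
  by_contra! h
  obtain ⟨hAB, hAC, hBC⟩ := h
  by_cases hB : ∃ y ≠ a, c a y = c b b'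
  · by_cases hC : ∃ y ≠ a, c a y = c d d'
    · obtain ⟨y, hy, hyB⟩ := hB
      obtain ⟨y', hy', hyC⟩ := hC
      rcases hc.color_eq_or_eq_or_eq ha hy hy' with h | h | h
      · exact hAB (h.trans hyB)
      · exact hAC (h.trans hyC)
      · exact hBC (hyB.symm.trans (h.trans hyC))
    · exact hBC (hc.color_eq_of_forall_ne hsymm ha hd (fun w hw h => hC ⟨w, hw, h⟩) hb hAB.symm)
  · exact hBC (hc.color_eq_of_forall_ne hsymm ha hb (fun w hw h => hB ⟨w, hw, h⟩) hd
      hAC.symm).symm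

end PairColoring

theorem Finset.exists_eq_triple_of_card_eq_three {α : Type*} [DecidableEq α] {e : Finset α}
    (he : #e = 3) {u v : α} (hu : u ∈ e) (hv : v ∈ e) (huv : u ≠ v) :
    ∃ w, w ≠ u ∧ w ≠ v ∧ e = {u, v, w} := by
  have hsub : {u, v} ⊆ e := insert_subset hu (singleton_subset_iff.2 hv)
  obtain ⟨w, hw⟩ := card_eq_one.1
    (by rw [card_sdiff_of_subset hsub, he, card_pair huv] : #(e \ {u, v}) = 1)
  have hw' : w ∈ e \ {u, v} := hw ▸ mem_singleton_self w
  simp only [mem_sdiff, mem_insert, mem_singleton, not_or] at hw'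
  refine ⟨w, hw'.2.1, hw'.2.2, ?_⟩
  rw [← sdiff_union_of_subset hsub, hw]
  ext t
  simp only [mem_union, mem_insert, mem_singleton]
  tauto

section TightComponents

variable {α : Type*} [DecidableEq α] {H : Finset (Finset α)}

theorem SameTightComponent.symm {e f : Finset α} (h : SameTightComponent H e f) :
    SameTightComponent H f e := by
  have : Std.Symm (EdgeAdj H) := ⟨fun _ _ ⟨he, hf, hef⟩ => ⟨hf, he, by rwa [inter_comm]⟩⟩
  exact ⟨h.2.1, h.1, Std.Symm.symm _ _ h.2.2⟩

theorem SameTightComponent.trans {e f g : Finset α} (h₁ : SameTightComponent H e f)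
    (h₂ : SameTightComponent H f g) : SameTightComponent H e g :=
  ⟨h₁.1, h₂.2.1, h₁.2.2.trans h₂.2.2⟩

theorem sameTightComponent_of_mem_of_mem (h3 : ∀ e ∈ H, #e = 3) {e f : Finset α} {u v : α}
    (he : e ∈ H) (hf : f ∈ H) (huv : u ≠ v) (hue : u ∈ e) (hve : v ∈ e) (huf : u ∈ f)
    (hvf : v ∈ f) : SameTightComponent H e f := by
  refine ⟨he, hf, ?_⟩
  rcases eq_or_ne e f with rfl | hne
  · rfl
  refine .single ⟨he, hf, le_antisymm ?_ ?_⟩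
  · by_contra! hlt
    have hee : e ∩ f = e := eq_of_subset_of_card_le inter_subset_left (by rw [h3 e he]; omega)
    have hff : e ∩ f = f := eq_of_subset_of_card_le inter_subset_right (by rw [h3 f hf]; omega)
    exact hne (hee.symm.trans hff)
  · rw [← card_pair huv]
    exact card_le_card (insert_subset (mem_inter.2 ⟨hue, huf⟩)
      (singleton_subset_iff.2 (mem_inter.2 ⟨hve, hvf⟩)))

def pairComponent (H : Finset (Finset α)) (u v : α) : Set (Finset α) :=
  {f | ∃ e ∈ H, u ∈ e ∧ v ∈ e ∧ SameTightComponent H e f}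

theorem pairComponent_comm (H : Finset (Finset α)) (u v : α) :
    pairComponent H u v = pairComponent H v u := by
  ext f
  exact ⟨fun ⟨e, he, hu, hv, h⟩ => ⟨e, he, hv, hu, h⟩, fun ⟨e, he, hv, hu, h⟩ => ⟨e, he, hu, hv, h⟩⟩

theorem pairComponent_eq (h3 : ∀ e ∈ H, #e = 3) {e : Finset α} {u v : α} (he : e ∈ H)
    (huv : u ≠ v) (hu : u ∈ e) (hv : v ∈ e) :
    pairComponent H u v = {f | SameTightComponent H e f} := by
  ext f
  constructor
  · rintro ⟨e', he', hu', hv', h⟩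
    exact (sameTightComponent_of_mem_of_mem h3 he he' huv hu hv hu' hv').trans h
  · exact fun h => ⟨e, he, hu, hv, h⟩

theorem sameTightComponent_of_pairComponent_eq (h3 : ∀ e ∈ H, #e = 3) {e f : Finset α}
    {u v u' v' : α} (he : e ∈ H) (huv : u ≠ v) (hu : u ∈ e) (hv : v ∈ e) (hf : f ∈ H)
    (huv' : u' ≠ v') (hu' : u' ∈ f) (hv' : v' ∈ f)
    (h : pairComponent H u v = pairComponent H u' v') : SameTightComponent H e f := by
  rw [pairComponent_eq h3 he huv hu hv, pairComponent_eq h3 hf huv' hu' hv'] at h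
  have hfe : e ∈ {g | SameTightComponent H f g} := h ▸ ⟨he, he, .refl⟩
  exact hfe.symm

end TightComponents

theorem codeg_le_card_monoCommonNbrs {H : Finset (Finset V)} (h3 : ∀ e ∈ H, #e = 3) {u v : V}
    (huv : u ≠ v) : codeg H u v ≤ #(monoCommonNbrs (pairComponent H) u v) := by
  refine card_le_card_of_surjOn (fun w => ({u, v, w} : Finset V)) ?_
  intro e he
  obtain ⟨heH, hue, hve⟩ := mem_filter.1 (mem_coe.1 he)
  obtain ⟨w, hwu, hwv, rfl⟩ := exists_eq_triple_of_card_eq_three (h3 _ heH) hue hve huv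
  refine ⟨w, mem_monoCommonNbrs.2 ⟨hwu, hwv, ?_, ?_⟩, rfl⟩
  · rw [pairComponent_eq h3 heH hwu.symm hue (by simp), pairComponent_eq h3 heH huv hue hve]
  · rw [pairComponent_eq h3 heH hwv.symm hve (by simp), pairComponent_eq h3 heH huv hue hve]

theorem statement7 (n : ℕ) (H : Finset (Finset (Fin n))) (h3 : ∀ e ∈ H, e.card = 3)
    (hdeg : ∀ u v : Fin n, u ≠ v → (n : ℝ) / 3 ≤ (codeg H u v : ℝ)) :
    AtMostTwoTightComponents H := by
  have hc : MonoCodegreeDense (pairComponent H) := fun u v huv => by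
    have hdeg' : n ≤ 3 * codeg H u v := by
      exact_mod_cast (by linarith [hdeg u v huv] : (n : ℝ) ≤ 3 * codeg H u v)
    have := codeg_le_card_monoCommonNbrs h3 huv
    rw [Fintype.card_fin]
    omega
  have hpair {e} (he : e ∈ H) : ∃ u ∈ e, ∃ v ∈ e, u ≠ v :=
    one_lt_card.1 (by rw [h3 e he]; norm_num)
  intro e he f hf g hg
  obtain ⟨a, ha, a', ha', haa'⟩ := hpair he
  obtain ⟨b, hb, b', hb', hbb'⟩ := hpair hf
  obtain ⟨d, hd, d', hd', hdd'⟩ := hpair hg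
  rcases hc.color_eq_or_eq_or_eq_of_ne (pairComponent_comm H) haa'.symm hbb'.symm hdd'.symm
    with h | h | h
  · exact .inl (sameTightComponent_of_pairComponent_eq h3 he haa' ha ha' hf hbb' hb hb' h)
  · exact .inr (.inl (sameTightComponent_of_pairComponent_eq h3 he haa' ha ha' hg hdd' hd hd' h))
  · exact .inr (.inr (sameTightComponent_of_pairComponent_eq h3 hf hbb' hb hb' hg hdd' hd hd' h))
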